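/- arXiv:2105.01655 — 3 statements merged into one kernel-verified Lean document; each statement's English description precedes it below -/
import Mathlib

section
/- The general 2D isotropic viscosity tensor η_{ijkl} = η(δ_{ik}δ_{jl}+δ_{il}δ_{jk}-δ_{ij}δ_{kl}) + ζ δ_{ij}δ_{kl} + Γ ε_{ij}ε_{kl} + η_H(ε_{ik}δ_{jl}+ε_{jl}δ_{ik}) + ζ_H δ_{ij}ε_{kl} + Γ_H ε_{ij}δ_{kl} satisfies η_{ijkl} = -η_{klij} for all indices if and only if η = ζ = Γ = 0 and ζ_H = -Γ_H (with η_H arbitrary). -/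
noncomputable section

def eps : Fin 2 → Fin 2 → ℝ := fun i j =>
  if i = 0 ∧ j = 1 then 1 else if i = 1 ∧ j = 0 then -1 else 0

def kd : Fin 2 → Fin 2 → ℝ := fun i j => if i = j then 1 else 0

def viscTensor (η ζ Γ ηH ζH ΓH : ℝ) : Fin 2 → Fin 2 → Fin 2 → Fin 2 → ℝ :=
  fun i j k l =>
    η * (kd i k * kd j l + kd i l * kd j k - kd i j * kd k l) +
    ζ * (kd i j * kd k l) + Γ * (eps i j * eps k l) +
    ηH * (eps i k * kd j l + eps j l * kd i k) +
    ζH * (kd i j * eps k l) + ΓH * (eps i j * kd k l)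

/-- The isotropic viscosity tensor is pair-antisymmetric iff η=ζ=Γ=0 and ζ_H = -Γ_H. -/
theorem viscTensor_antisymm_iff (η ζ Γ ηH ζH ΓH : ℝ) :
    (∀ i j k l, viscTensor η ζ Γ ηH ζH ΓH i j k l =
        - viscTensor η ζ Γ ηH ζH ΓH k l i j) ↔
      (η = 0 ∧ ζ = 0 ∧ Γ = 0 ∧ ζH = -ΓH) := by
  constructor
  · intro h
    have h1 := h 0 0 0 0
    have h2 := h 0 1 0 1
    have h3 := h 0 1 1 0
    have h4 := h 0 0 1 1
    have h5 := h 0 0 0 1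
    simp [viscTensor, eps, kd] at h1 h2 h3 h4 h5
    refine ⟨by linarith, by linarith, by linarith, by linarith⟩
  · rintro ⟨h1, h2, h3, h4⟩
    intro i j k l
    subst h1 h2 h3 h4
    fin_cases i <;> fin_cases j <;> fin_cases k <;> fin_cases l <;>
      simp [viscTensor, eps, kd] <;> ring
end
end

section
/- Let A_{ijkl} = (F/2)ε_{ij}ε_{kl} + (F/2)(δ_{ik}δ_{jl}+δ_{il}δ_{jk}-δ_{ij}δ_{kl}) + (F/2 - ρF')δ_{ij}δ_{kl} - ρG'δ_{ij}ε_{kl} - η_{ijkl}, where η_{ijkl} is the general 2D isotropic viscosity tensor with coefficients (η, ζ, Γ, η_H, ζ_H, Γ_H). If F = 0, then A_{ijkl} = -A_{klij} for all indices if and only if η = ζ = Γ = 0 and ζ_H + Γ_H + ρG' = 0. -/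
noncomputable section

/-- With F = 0, the tensor A is pair-antisymmetric iff η = ζ = Γ = 0 and
ζ_H + Γ_H + ρG' = 0. -/
theorem A_antisymm_iff (η ζ Γ ηH ζH ΓH ρ G' F F' : ℝ) (hρ : 0 < ρ) (hF : F = 0) (hF' : F' = 0)
    (A : Fin 2 → Fin 2 → Fin 2 → Fin 2 → ℝ)
    (hA : ∀ i j k l, A i j k l =
      (F/2) * (eps i j * eps k l) +
      (F/2) * (kd i k * kd j l + kd i l * kd j k - kd i j * kd k l) +
      (F/2 - ρ * F') * (kd i j * kd k l) - ρ * G' * (kd i j * eps k l) -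
      viscTensor η ζ Γ ηH ζH ΓH i j k l) :
    (∀ i j k l, A i j k l = - A k l i j) ↔
      (η = 0 ∧ ζ = 0 ∧ Γ = 0 ∧ ζH + ΓH + ρ * G' = 0) := by
  subst hF hF'
  constructor
  · intro h
    have h1 := h 0 0 0 0
    have h2 := h 0 1 0 1
    have h3 := h 0 0 1 1
    have h4 := h 0 0 0 1
    simp only [hA] at h1 h2 h3 h4
    simp [eps, kd, viscTensor] at h1 h2 h3 h4
    refine ⟨by linarith, by linarith, by linarith, by linarith⟩
  · rintro ⟨h1, h2, h3, h4⟩ i j k l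
    rw [hA, hA]
    fin_cases i <;> fin_cases j <;> fin_cases k <;> fin_cases l <;>
      simp [eps, kd, viscTensor] <;> linarith
end
end

section
/- Given differentiable G on I ⊂ (0,∞) with G' ≠ 0, constants c, and defining η_H = cG, Γ_H = c(G - 2ρG'), W = (2c/ρ)(G')², these functions satisfy all three constraints: η_H'G'/ρ = W/2, (G'/ρ)(Γ_H - η_H) + ρW = 0, and (G'/ρ)'(Γ_H - η_H) - η_H'G'/ρ + ρW'/2 = 0. -/
/-! Everything follows from `Γ_H - η_H = -2cρG'` and `η_H' = cG'`. The second constraint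
is then immediate and the first reads `cG'²/ρ = W/2`. In the third, the quotient rule gives
`(G'/ρ)'(Γ_H - η_H) = -2cG'G'' + 2cG'²/ρ` and the product rule gives
`ρW'/2 = 2cG'G'' - cG'²/ρ`: the `G''` terms cancel and the remaining `cG'²/ρ` is
`η_H'G'/ρ`. -/

section

variable {𝕜 : Type*} [NontriviallyNormedField 𝕜] {f : 𝕜 → 𝕜} {f' x : 𝕜}

theorem HasDerivAt.div_id (hf : HasDerivAt f f' x) (hx : x ≠ 0) :
    HasDerivAt (fun s => f s / s) ((f' * x - f x) / x ^ 2) x := by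
  simpa using hf.fun_div (hasDerivAt_id' x) hx

theorem HasDerivAt.const_div_mul_sq (a : 𝕜) (hf : HasDerivAt f f' x)
    (hx : x ≠ 0) :
    HasDerivAt (fun s => a / s * f s ^ 2) (-a / x ^ 2 * f x ^ 2 + a / x * (2 * f x * f')) x := by
  have hrecip : HasDerivAt (fun s => a / s) (-a / x ^ 2) x := by
    simpa using (hasDerivAt_const x a).fun_div (hasDerivAt_id' x) hx
  have hsq : HasDerivAt (fun s => f s ^ 2) (2 * f x * f') x := by
    simpa [mul_assoc] using hf.fun_pow 2
  exact hrecip.mul hsq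

end

theorem case2_satisfies_constraints_general
    (I : Set ℝ) (hIpos : I ⊆ Set.Ioi (0 : ℝ))
    (G G' G'' : ℝ → ℝ)
    (hG : ∀ ρ ∈ I, HasDerivAt G (G' ρ) ρ)
    (hG' : ∀ ρ ∈ I, HasDerivAt G' (G'' ρ) ρ)
    (c : ℝ) (ηH ΓH W : ℝ → ℝ)
    (hη : ∀ ρ, ηH ρ = c * G ρ)
    (hΓ : ∀ ρ, ΓH ρ = c * (G ρ - 2 * ρ * G' ρ))
    (hW : ∀ ρ, W ρ = (2 * c / ρ) * G' ρ ^ 2) :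
    ∀ ρ ∈ I,
      deriv ηH ρ * G' ρ / ρ = W ρ / 2 ∧
      (G' ρ / ρ) * (ΓH ρ - ηH ρ) + ρ * W ρ = 0 ∧
      deriv (fun s => G' s / s) ρ * (ΓH ρ - ηH ρ) -
        deriv ηH ρ * G' ρ / ρ + ρ * deriv W ρ / 2 = 0 := by
  intro ρ hρ
  have hρ0 : ρ ≠ 0 := (hIpos hρ).ne'
  have hdη : deriv ηH ρ = c * G' ρ := by
    rw [funext hη]
    exact ((hG ρ hρ).const_mul c).deriv
  have hdW : deriv W ρ =
      -(2 * c) / ρ ^ 2 * G' ρ ^ 2 + 2 * c / ρ * (2 * G' ρ * G'' ρ) := by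
    rw [funext hW]
    exact ((hG' ρ hρ).const_div_mul_sq (2 * c) hρ0).deriv
  have hdq : deriv (fun s => G' s / s) ρ = (G'' ρ * ρ - G' ρ) / ρ ^ 2 :=
    ((hG' ρ hρ).div_id hρ0).deriv
  refine ⟨?_, ?_, ?_⟩
  · rw [hdη, hW]; field_simp
  · rw [hΓ, hη, hW]; field_simp; ring
  · rw [hdq, hdη, hdW, hΓ, hη]; field_simp; ring

/-- For η_H = cG, Γ_H = c(G - 2ρG'), W = (2c/ρ)(G')², all three energy-conservation
constraints are satisfied. -/
theorem case2_satisfies_constraints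
    (I : Set ℝ) (hIopen : IsOpen I) (hIpos : I ⊆ Set.Ioi (0 : ℝ))
    (G G' G'' : ℝ → ℝ)
    (hG : ∀ ρ ∈ I, HasDerivAt G (G' ρ) ρ)
    (hG' : ∀ ρ ∈ I, HasDerivAt G' (G'' ρ) ρ)
    (hGne : ∀ ρ ∈ I, G' ρ ≠ 0)
    (c : ℝ) (ηH ΓH W : ℝ → ℝ)
    (hη : ∀ ρ, ηH ρ = c * G ρ)
    (hΓ : ∀ ρ, ΓH ρ = c * (G ρ - 2 * ρ * G' ρ))
    (hW : ∀ ρ, W ρ = (2 * c / ρ) * G' ρ ^ 2) :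
    ∀ ρ ∈ I,
      deriv ηH ρ * G' ρ / ρ = W ρ / 2 ∧
      (G' ρ / ρ) * (ΓH ρ - ηH ρ) + ρ * W ρ = 0 ∧
      deriv (fun s => G' s / s) ρ * (ΓH ρ - ηH ρ) -
        deriv ηH ρ * G' ρ / ρ + ρ * deriv W ρ / 2 = 0 :=
  case2_satisfies_constraints_general I hIpos G G' G'' hG hG' c ηH ΓH W hη hΓ hW
end
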